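/- Let $a\in(-1,1)$, $\nu=(a-1)/2$, and define $h_2(z)=(z/4)^{1-a}e^{-z/2}\sum_{k=0}^\infty \frac{(z/4)^{2k}}{k!\,\Gamma(k-\nu+1)}$ for $z>0$. Then $h_2$ satisfies the ODE $z h''(z)+(z+a)h'(z)+\frac a2 h(z)=0$ for all $z>0$. -/

import Mathlib

/-!
Put `b = (3 - a) / 2 = 1 - ν`. The series in `h₂` is `G ((z / 4) ^ 2)` with
`G t = ∑ tᵏ / (k! Γ(k + b))`, an entire power series (its coefficients are `O(1 / k!)`) whose
coefficient recurrence `(k + 1) (k + b) c_{k+1} = c_k` says exactly that `t G'' + b G' = G`.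
The substitution `t = (z / 4) ^ 2` turns this into `z F'' + (2 - a) F' = (z / 4) F` for
`F z = G ((z / 4) ^ 2)`. The gauge factor `w z = (z / 4) ^ (1 - a) e^(-z / 2)` has logarithmic
derivative `(1 - a) / z - 1 / 2`, and multiplying by it carries that equation for `F` into the
stated one for `h₂ = w F`.
-/

noncomputable section
open Real

/-- The solution `h₂(z) = (z/4)^{1-a} e^{-z/2} ∑_{k≥0} (z/4)^{2k} / (k! Γ(k-ν+1))`
with `ν = (a-1)/2`. -/
def h₂ (a z : ℝ) : ℝ :=
  (z / 4) ^ (1 - a) * Real.exp (-z / 2) *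
    ∑' k : ℕ, (z / 4) ^ (2 * k) / ((Nat.factorial k : ℝ) * Real.Gamma ((k : ℝ) - (a - 1) / 2 + 1))

open scoped Nat

def derivCoeff (c : ℕ → ℝ) (n : ℕ) : ℝ := (n + 1) * c (n + 1)

section FactorialBoundedCoeff

variable {c : ℕ → ℝ} {C : ℝ}

lemma summable_mul_pow_of_abs_le (hc : ∀ n, |c n| ≤ C / n !) (x : ℝ) :
    Summable fun n => c n * x ^ n := by
  refine .of_norm_bounded ((Real.summable_pow_div_factorial |x|).mul_left C) fun n => ?_
  calc ‖c n * x ^ n‖ = |c n| * |x| ^ n := by rw [Real.norm_eq_abs, abs_mul, abs_pow]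
    _ ≤ C / n ! * |x| ^ n := by gcongr; exact hc n
    _ = C * (|x| ^ n / n !) := by ring

lemma abs_derivCoeff_le (hc : ∀ n, |c n| ≤ C / n !) (n : ℕ) : |derivCoeff c n| ≤ C / n ! := by
  have hn : (0 : ℝ) < n + 1 := by positivity
  calc |derivCoeff c n| = (n + 1) * |c (n + 1)| := by
        rw [derivCoeff, abs_mul, abs_of_pos hn]
    _ ≤ (n + 1) * (C / (n + 1)!) := by gcongr; exact hc _
    _ = C / n ! := by rw [Nat.factorial_succ]; push_cast; field_simp

theorem hasDerivAt_tsum_mul_pow (hc : ∀ n, |c n| ≤ C / n !) (x : ℝ) :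
    HasDerivAt (fun y => ∑' n, c n * y ^ n) (∑' n, derivCoeff c n * x ^ n) x := by
  set R := |x| + 1
  have hR : 1 ≤ R := le_add_of_nonneg_left (abs_nonneg x)
  have hC : 0 ≤ C := (abs_nonneg _).trans (by simpa using hc 0)
  have hbound : ∀ n, ∀ y ∈ Metric.ball (0 : ℝ) R,
      ‖c n * ((n : ℝ) * y ^ (n - 1))‖ ≤ C * ((2 * R) ^ n / n !) := by
    intro n y hy
    have hy : |y| ≤ R := (mem_ball_zero_iff.1 hy).le
    have h2n : (n : ℝ) ≤ 2 ^ n := by exact_mod_cast (Nat.lt_two_pow_self).le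
    have hRn : |y| ^ (n - 1) ≤ R ^ n :=
      (pow_le_pow_left₀ (abs_nonneg y) hy _).trans (pow_le_pow_right₀ hR (Nat.sub_le n 1))
    rw [Real.norm_eq_abs, abs_mul, abs_mul, abs_pow, Nat.abs_cast, mul_pow]
    calc |c n| * (n * |y| ^ (n - 1)) ≤ C / n ! * (2 ^ n * R ^ n) := by gcongr; exact hc n
      _ = C * (2 ^ n * R ^ n / n !) := by ring
  have hderiv := hasDerivAt_tsum_of_isPreconnected
    ((Real.summable_pow_div_factorial (2 * R)).mul_left C) Metric.isOpen_ball
    (convex_ball 0 R).isPreconnected (fun n y _ => (hasDerivAt_pow n y).const_mul (c n)) hbound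
    (Metric.mem_ball_self (by linarith)) (summable_mul_pow_of_abs_le hc 0)
    (mem_ball_zero_iff.2 (lt_add_one _))
  have hshift : (fun n => c (n + 1) * (((n + 1 : ℕ) : ℝ) * x ^ (n + 1 - 1))) =
      fun n => derivCoeff c n * x ^ n := by
    funext n; rw [derivCoeff, Nat.add_sub_cancel]; push_cast; ring
  refine hderiv.congr_deriv ?_
  rw [tsum_eq_zero_add' (hshift ▸ summable_mul_pow_of_abs_le (abs_derivCoeff_le hc) x), hshift]
  simp

lemma hasSum_natCast_mul_mul_pow (hc : ∀ n, |c n| ≤ C / n !) (x : ℝ) :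
    HasSum (fun n => n * c n * x ^ n) (x * ∑' n, derivCoeff c n * x ^ n) := by
  refine (hasSum_nat_add_iff' 1).1 ?_
  have hshift : (fun n => ((n + 1 : ℕ) : ℝ) * c (n + 1) * x ^ (n + 1)) =
      fun n => x * (derivCoeff c n * x ^ n) := by
    funext n; rw [derivCoeff]; push_cast; ring
  simp only [Finset.range_one, Finset.sum_singleton, CharP.cast_eq_zero, zero_mul, sub_zero]
  rw [hshift]
  exact (summable_mul_pow_of_abs_le (abs_derivCoeff_le hc) x).hasSum.mul_left x

theorem tsum_mul_pow_ode {b : ℝ} (hc : ∀ n, |c n| ≤ C / n !)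
    (hrec : ∀ n, (n + b) * derivCoeff c n = c n) (x : ℝ) :
    x * ∑' n, derivCoeff (derivCoeff c) n * x ^ n + b * ∑' n, derivCoeff c n * x ^ n =
      ∑' n, c n * x ^ n := by
  have hd := summable_mul_pow_of_abs_le (abs_derivCoeff_le hc) x
  rw [← ((hasSum_natCast_mul_mul_pow (abs_derivCoeff_le hc) x).add (hd.hasSum.mul_left b)).tsum_eq]
  exact tsum_congr fun n => by rw [← hrec n]; ring

end FactorialBoundedCoeff

lemma inv_Gamma_natCast_add_le {b : ℝ} (hb : 0 < b) (k : ℕ) :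
    (Gamma (k + b))⁻¹ ≤ (Gamma b)⁻¹ + (Gamma (b + 1))⁻¹ + 1 := by
  have h₀ := (inv_pos.2 (Gamma_pos_of_pos hb)).le
  have h₁ := (inv_pos.2 (Gamma_pos_of_pos (by linarith : 0 < b + 1))).le
  rcases k with _ | _ | k
  · simp only [CharP.cast_eq_zero, zero_add]; linarith
  · rw [Nat.cast_one, add_comm]; linarith
  · have h2 : 2 ≤ ((k + 2 : ℕ) : ℝ) + b := by push_cast; linarith [(k.cast_nonneg : (0:ℝ) ≤ k)]
    have : 1 ≤ Gamma ((k + 2 : ℕ) + b) :=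
      Gamma_two ▸ Gamma_strictMonoOn_Ici.monotoneOn Set.self_mem_Ici h2 h2
    linarith [inv_le_one_of_one_le₀ this]

-- `∑ besselCoeff b k * t ^ k = t ^ ((1 - b) / 2) * I_{b-1}(2 √t)`, a modified Bessel function.
def besselCoeff (b : ℝ) (k : ℕ) : ℝ := (k ! * Gamma (k + b))⁻¹

lemma abs_besselCoeff_le {b : ℝ} (hb : 0 < b) (k : ℕ) :
    |besselCoeff b k| ≤ ((Gamma b)⁻¹ + (Gamma (b + 1))⁻¹ + 1) / k ! := by
  have hΓ := Gamma_pos_of_pos (by positivity : 0 < k + b)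
  rw [besselCoeff, mul_inv, abs_of_nonneg (by positivity), div_eq_inv_mul]
  exact mul_le_mul_of_nonneg_left (inv_Gamma_natCast_add_le hb k) (by positivity)

lemma natCast_add_mul_derivCoeff_besselCoeff {b : ℝ} (hb : 0 < b) (k : ℕ) :
    (k + b) * derivCoeff (besselCoeff b) k = besselCoeff b k := by
  have hkb : 0 < (k : ℝ) + b := by positivity
  rw [derivCoeff, besselCoeff, besselCoeff, Nat.factorial_succ, Nat.cast_succ, add_right_comm,
    Gamma_add_one hkb.ne']
  have := Gamma_pos_of_pos hkb
  push_cast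
  field_simp

lemma hasDerivAt_comp_div_four_sq {G G' : ℝ → ℝ} (hG : ∀ t, HasDerivAt G (G' t) t) (x : ℝ) :
    HasDerivAt (fun y => G ((y / 4) ^ 2)) (G' ((x / 4) ^ 2) * (x / 8)) x := by
  have hsq : HasDerivAt (fun y : ℝ => (y / 4) ^ 2) (x / 8) x :=
    (((hasDerivAt_id x).div_const 4).fun_pow 2).congr_deriv (by simp; ring)
  exact (hG _).comp x hsq

lemma hasDerivAt_div_four_rpow_mul_exp (a : ℝ) {x : ℝ} (hx : 0 < x) :
    HasDerivAt (fun y => (y / 4) ^ (1 - a) * exp (-y / 2))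
      ((x / 4) ^ (1 - a) * exp (-x / 2) * ((1 - a) / x - 1 / 2)) x := by
  have hx4 : x / 4 ≠ 0 := by positivity
  have hpow : HasDerivAt (fun y : ℝ => (y / 4) ^ (1 - a)) ((x / 4) ^ (1 - a) * ((1 - a) / x)) x :=
    (((hasDerivAt_id x).div_const 4).rpow_const (p := 1 - a) (Or.inl hx4)).congr_deriv
      (by rw [id, rpow_sub_one hx4]; field_simp)
  have hexp : HasDerivAt (fun y : ℝ => exp (-y / 2)) (exp (-x / 2) * (-1 / 2)) x :=
    (hasDerivAt_exp _).comp x ((hasDerivAt_id x).fun_neg.div_const 2)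
  exact (hpow.fun_mul hexp).congr_deriv (by ring)

theorem ode_of_eq_div_four_rpow_mul_exp_mul {a z F'' : ℝ} {h F F' : ℝ → ℝ} (hz : 0 < z)
    (hh : ∀ x, h x = (x / 4) ^ (1 - a) * exp (-x / 2) * F x)
    (hF : ∀ x, HasDerivAt F (F' x) x) (hF' : HasDerivAt F' F'' z)
    (hode : z * F'' + (2 - a) * F' z = z / 4 * F z) :
    z * deriv (deriv h) z + (z + a) * deriv h z + a / 2 * h z = 0 := by
  set w := fun y : ℝ => (y / 4) ^ (1 - a) * exp (-y / 2)
  set p := fun y : ℝ => (1 - a) * y⁻¹ - 1 / 2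
  have hw : ∀ x, 0 < x → HasDerivAt w (w x * p x) x := fun x hx =>
    (hasDerivAt_div_four_rpow_mul_exp a hx).congr_deriv (by simp only [w, p]; ring)
  have hp : HasDerivAt p ((1 - a) * -(z ^ 2)⁻¹) z :=
    ((hasDerivAt_inv hz.ne').const_mul (1 - a)).sub_const (1 / 2)
  have hh' : ∀ x, 0 < x → HasDerivAt h (w x * (p x * F x + F' x)) x := by
    intro x hx
    rw [show h = fun y => w y * F y from funext hh]
    exact ((hw x hx).fun_mul (hF x)).congr_deriv (by ring)
  have hderiv : deriv h =ᶠ[nhds z] fun x => w x * (p x * F x + F' x) := by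
    filter_upwards [Ioi_mem_nhds hz] with x hx
    exact (hh' x hx).deriv
  rw [hderiv.deriv_eq, ((hw z hz).fun_mul ((hp.fun_mul (hF z)).fun_add hF')).deriv,
    (hh' z hz).deriv, hh z]
  simp only [w, p]
  field_simp
  linear_combination (4 * z * (z / 4) ^ (1 - a) * exp (-(z / 2))) * hode

lemma h₂_eq (a x : ℝ) :
    h₂ a x = (x / 4) ^ (1 - a) * exp (-x / 2) *
      ∑' k, besselCoeff ((3 - a) / 2) k * ((x / 4) ^ 2) ^ k := by
  rw [h₂]
  congr 1
  refine tsum_congr fun k => ?_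
  rw [besselCoeff, ← pow_mul, div_eq_inv_mul]
  ring_nf

theorem h₂_ode_general (a : ℝ) (ha₂ : a < 1) (z : ℝ) (hz : 0 < z) :
    z * deriv (deriv (h₂ a)) z + (z + a) * deriv (h₂ a) z + a / 2 * h₂ a z = 0 := by
  have hb : 0 < (3 - a) / 2 := by linarith
  have hc := abs_besselCoeff_le hb
  have hG := hasDerivAt_comp_div_four_sq (hasDerivAt_tsum_mul_pow hc)
  have hG' := (hasDerivAt_comp_div_four_sq
    (hasDerivAt_tsum_mul_pow (abs_derivCoeff_le hc)) z).fun_mul ((hasDerivAt_id' z).div_const 8)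
  refine ode_of_eq_div_four_rpow_mul_exp_mul hz (h₂_eq a) hG hG' ?_
  linear_combination (z / 4) *
    tsum_mul_pow_ode hc (natCast_add_mul_derivCoeff_besselCoeff hb) ((z / 4) ^ 2)

/-- `h₂` satisfies the ODE `z h'' + (z+a) h' + (a/2) h = 0` for all `z > 0`. -/
theorem h₂_ode (a : ℝ) (ha₁ : -1 < a) (ha₂ : a < 1) (z : ℝ) (hz : 0 < z) :
    z * deriv (deriv (h₂ a)) z + (z + a) * deriv (h₂ a) z + a / 2 * h₂ a z = 0 :=
  h₂_ode_general a ha₂ z hz
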